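/- arXiv:2605.15373 — 5 statements merged into one kernel-verified Lean document; each statement's English description precedes it below -/
import Mathlib

section
/- Let p and p_ε (ε > 0) be probability densities with respect to a σ-finite measure ν, and suppose the path is differentiable in quadratic mean at ε = 0 with score ℓ̇ ∈ L²(p·ν): ‖(√p_ε - √p)/ε - (1/2)ℓ̇√p‖_{L²(ν)} → 0 as ε → 0. Then ‖(p_ε - p)/ε - p·ℓ̇‖_{L¹(ν)} → 0 as ε → 0. -/
/-!
Write `r_ε = (√p_ε - √p)/ε - ½ ℓ̇ √p` for the QMD remainder. Dividing
`p_ε - p = 2√p (√p_ε - √p) + (√p_ε - √p)²` by `ε` gives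
`(p_ε - p)/ε - p ℓ̇ = 2 √p r_ε + ε (r_ε + ½ ℓ̇ √p)²`. By Cauchy–Schwarz the first term has
`L¹` norm at most `2 ‖√p‖₂ ‖r_ε‖₂ = 2 ‖r_ε‖₂`, and the second at most `2ε (‖r_ε‖₂² + ¼ ‖ℓ̇‖²_{L²(P)})`;
both tend to `0`.
-/

open MeasureTheory Filter

lemma abs_div_sub_mul_le {a b ε ℓ : ℝ} (ha : 0 ≤ a) (hb : 0 ≤ b) (hε : 0 < ε) :
    |(b - a) / ε - a * ℓ| ≤ 2 * (√a * |(√b - √a) / ε - 1 / 2 * ℓ * √a|)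
      + 2 * ε * ((√b - √a) / ε - 1 / 2 * ℓ * √a) ^ 2 + ε / 2 * (a * ℓ ^ 2) := by
  set r := (√b - √a) / ε - 1 / 2 * ℓ * √a
  have hid : (b - a) / ε - a * ℓ = 2 * √a * r + ε * (r + 1 / 2 * ℓ * √a) ^ 2 := by
    have key : ∀ s t : ℝ, (t ^ 2 - s ^ 2) / ε - s ^ 2 * ℓ = 2 * s * ((t - s) / ε - 1 / 2 * ℓ * s)
        + ε * ((t - s) / ε - 1 / 2 * ℓ * s + 1 / 2 * ℓ * s) ^ 2 := by
      intro s t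
      field_simp
      ring
    simpa only [Real.sq_sqrt ha, Real.sq_sqrt hb] using key √a √b
  have hsq : (r + 1 / 2 * ℓ * √a) ^ 2 ≤ 2 * r ^ 2 + a * ℓ ^ 2 / 2 := by
    nlinarith [sq_nonneg (r - 1 / 2 * ℓ * √a), Real.sq_sqrt ha]
  calc |(b - a) / ε - a * ℓ|
      ≤ |2 * √a * r| + |ε * (r + 1 / 2 * ℓ * √a) ^ 2| := hid ▸ abs_add_le _ _
    _ = 2 * (√a * |r|) + ε * (r + 1 / 2 * ℓ * √a) ^ 2 := by
      rw [abs_mul, abs_mul, abs_mul, abs_two, abs_of_nonneg (Real.sqrt_nonneg a), abs_of_pos hε,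
        abs_of_nonneg (sq_nonneg (r + 1 / 2 * ℓ * √a)), mul_assoc]
    _ ≤ 2 * (√a * |r|) + 2 * ε * r ^ 2 + ε / 2 * (a * ℓ ^ 2) := by
      nlinarith [mul_le_mul_of_nonneg_left hsq hε.le]

section Integrals

variable {α : Type*} [MeasurableSpace α] {μ : Measure α}

theorem integral_mul_le_sqrt_mul_sqrt {f g : α → ℝ} (hf0 : 0 ≤ᵐ[μ] f) (hg0 : 0 ≤ᵐ[μ] g)
    (hf : MemLp f 2 μ) (hg : MemLp g 2 μ) :
    ∫ x, f x * g x ∂μ ≤ √(∫ x, f x ^ 2 ∂μ) * √(∫ x, g x ^ 2 ∂μ) := by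
  have h := integral_mul_le_Lp_mul_Lq_of_nonneg Real.HolderConjugate.two_two hf0 hg0
    (by simpa using hf) (by simpa using hg)
  simpa only [Real.sqrt_eq_rpow, Real.rpow_two] using h

lemma memLp_two_sqrt {f : α → ℝ} (hf : Integrable f μ) (hf0 : ∀ x, 0 ≤ f x) :
    MemLp (fun x => √(f x)) 2 μ := by
  refine (memLp_two_iff_integrable_sq
    (Real.continuous_sqrt.comp_aestronglyMeasurable hf.1)).2 ?_
  simpa only [Real.sq_sqrt (hf0 _)] using hf

lemma memLp_two_mul_sqrt {p ℓ : α → ℝ} (hp : AEStronglyMeasurable p μ) (hp0 : ∀ x, 0 ≤ p x)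
    (hℓ : AEStronglyMeasurable ℓ μ) (hpℓ : Integrable (fun x => p x * ℓ x ^ 2) μ) :
    MemLp (fun x => ℓ x * √(p x)) 2 μ := by
  have hm : AEStronglyMeasurable (fun x => ℓ x * √(p x)) μ :=
    hℓ.mul (Real.continuous_sqrt.comp_aestronglyMeasurable hp)
  refine (memLp_two_iff_integrable_sq hm).2 ?_
  simpa only [mul_pow, Real.sq_sqrt (hp0 _), mul_comm] using hpℓ

noncomputable def qmdRemainder (p q ℓ : α → ℝ) (ε : ℝ) (x : α) : ℝ :=
  (√(q x) - √(p x)) / ε - 1 / 2 * ℓ x * √(p x)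

lemma memLp_two_qmdRemainder {p q ℓ : α → ℝ} (hp : Integrable p μ) (hq : Integrable q μ)
    (hp0 : ∀ x, 0 ≤ p x) (hq0 : ∀ x, 0 ≤ q x) (hℓ : AEStronglyMeasurable ℓ μ)
    (hpℓ : Integrable (fun x => p x * ℓ x ^ 2) μ) (ε : ℝ) :
    MemLp (qmdRemainder p q ℓ ε) 2 μ := by
  have h := (((memLp_two_sqrt hq hq0).sub (memLp_two_sqrt hp hp0)).mul_const ε⁻¹).sub
    ((memLp_two_mul_sqrt hp.1 hp0 hℓ hpℓ).const_mul (1 / 2))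
  simp only [← div_eq_mul_inv, ← mul_assoc] at h
  exact h

theorem integral_abs_div_sub_mul_le {p q ℓ : α → ℝ} (hp : Integrable p μ) (hq : Integrable q μ)
    (hp0 : ∀ x, 0 ≤ p x) (hq0 : ∀ x, 0 ≤ q x) (hℓ : AEStronglyMeasurable ℓ μ)
    (hpℓ : Integrable (fun x => p x * ℓ x ^ 2) μ) {ε : ℝ} (hε : 0 < ε) :
    ∫ x, |(q x - p x) / ε - p x * ℓ x| ∂μ ≤
      2 * (√(∫ x, p x ∂μ) * √(∫ x, qmdRemainder p q ℓ ε x ^ 2 ∂μ))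
        + 2 * ε * ∫ x, qmdRemainder p q ℓ ε x ^ 2 ∂μ + ε / 2 * ∫ x, p x * ℓ x ^ 2 ∂μ := by
  set r := qmdRemainder p q ℓ ε
  have hr : MemLp r 2 μ := memLp_two_qmdRemainder hp hq hp0 hq0 hℓ hpℓ ε
  have hs : MemLp (fun x => √(p x)) 2 μ := memLp_two_sqrt hp hp0
  have hsr : Integrable (fun x => √(p x) * |r x|) μ := hs.integrable_mul hr.abs
  have hcs : ∫ x, √(p x) * |r x| ∂μ ≤ √(∫ x, p x ∂μ) * √(∫ x, r x ^ 2 ∂μ) := by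
    have h := integral_mul_le_sqrt_mul_sqrt (ae_of_all _ fun x => Real.sqrt_nonneg (p x))
      (ae_of_all _ fun x => abs_nonneg (r x)) hs hr.abs
    simpa only [Real.sq_sqrt (hp0 _), sq_abs] using h
  have hsr_r2 : Integrable (fun x => 2 * (√(p x) * |r x|) + 2 * ε * r x ^ 2) μ :=
    (hsr.const_mul 2).add (hr.integrable_sq.const_mul _)
  calc ∫ x, |(q x - p x) / ε - p x * ℓ x| ∂μ
      ≤ ∫ x, 2 * (√(p x) * |r x|) + 2 * ε * r x ^ 2 + ε / 2 * (p x * ℓ x ^ 2) ∂μ :=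
        integral_mono_of_nonneg (ae_of_all _ fun x => abs_nonneg _)
          (hsr_r2.add (hpℓ.const_mul _))
          (ae_of_all _ fun x => abs_div_sub_mul_le (hp0 x) (hq0 x) hε)
    _ = 2 * ∫ x, √(p x) * |r x| ∂μ + 2 * ε * ∫ x, r x ^ 2 ∂μ
          + ε / 2 * ∫ x, p x * ℓ x ^ 2 ∂μ := by
      rw [integral_add hsr_r2 (hpℓ.const_mul _),
        integral_add (hsr.const_mul 2) (hr.integrable_sq.const_mul _),
        integral_const_mul, integral_const_mul, integral_const_mul]
    _ ≤ _ := by gcongr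

end Integrals

theorem stmt3_general {𝒪 : Type*} [MeasurableSpace 𝒪] (ν : Measure 𝒪)
    (p : 𝒪 → ℝ) (pe : ℝ → 𝒪 → ℝ) (ℓ : 𝒪 → ℝ)
    (hℓ : Measurable ℓ)
    (hp0 : ∀ x, 0 ≤ p x) (hpe0 : ∀ ε x, 0 ≤ pe ε x)
    (hpint : ∫ x, p x ∂ν = 1) (hpeint : ∀ ε, ∫ x, pe ε x ∂ν = 1)
    (hℓL2 : Integrable (fun x => p x * ℓ x ^ 2) ν)
    (hqmd : Tendsto (fun ε => ∫ x, ((Real.sqrt (pe ε x) - Real.sqrt (p x)) / ε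
        - (1/2) * ℓ x * Real.sqrt (p x)) ^ 2 ∂ν) (nhdsWithin 0 (Set.Ioi 0)) (nhds 0)) :
    Tendsto (fun ε => ∫ x, |(pe ε x - p x) / ε - p x * ℓ x| ∂ν)
      (nhdsWithin 0 (Set.Ioi 0)) (nhds 0) := by
  have hε0 : Tendsto (fun ε : ℝ => ε) (nhdsWithin 0 (Set.Ioi 0)) (nhds 0) :=
    tendsto_nhdsWithin_of_tendsto_nhds tendsto_id
  have hbound := (((hqmd.sqrt.const_mul (√(∫ x, p x ∂ν))).const_mul 2).add
    ((hε0.const_mul 2).mul hqmd)).add ((hε0.div_const 2).mul_const (∫ x, p x * ℓ x ^ 2 ∂ν))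
  simp only [Real.sqrt_zero, mul_zero, zero_mul, zero_div, add_zero] at hbound
  refine squeeze_zero' (Eventually.of_forall fun ε => integral_nonneg fun x => abs_nonneg _)
    ?_ hbound
  filter_upwards [self_mem_nhdsWithin] with ε (hε : 0 < ε)
  exact integral_abs_div_sub_mul_le (integrable_of_integral_eq_one hpint)
    (integrable_of_integral_eq_one (hpeint ε)) hp0 (hpe0 ε) hℓ.aestronglyMeasurable hℓL2 hε

theorem stmt3 {𝒪 : Type*} [MeasurableSpace 𝒪] (ν : Measure 𝒪) [SigmaFinite ν]
    (p : 𝒪 → ℝ) (pe : ℝ → 𝒪 → ℝ) (ℓ : 𝒪 → ℝ)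
    (hp : Measurable p) (hpe : ∀ ε, Measurable (pe ε)) (hℓ : Measurable ℓ)
    (hp0 : ∀ x, 0 ≤ p x) (hpe0 : ∀ ε x, 0 ≤ pe ε x)
    (hpint : ∫ x, p x ∂ν = 1) (hpeint : ∀ ε, ∫ x, pe ε x ∂ν = 1)
    (hℓL2 : Integrable (fun x => p x * ℓ x ^ 2) ν)
    (hqmd : Tendsto (fun ε => ∫ x, ((Real.sqrt (pe ε x) - Real.sqrt (p x)) / ε
        - (1/2) * ℓ x * Real.sqrt (p x)) ^ 2 ∂ν) (nhdsWithin 0 (Set.Ioi 0)) (nhds 0)) :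
    Tendsto (fun ε => ∫ x, |(pe ε x - p x) / ε - p x * ℓ x| ∂ν)
      (nhdsWithin 0 (Set.Ioi 0)) (nhds 0) :=
  stmt3_general ν p pe ℓ hℓ hp0 hpe0 hpint hpeint hℓL2 hqmd
end

section
/- Let p, p_ε be as in a quadratic mean differentiable path with score ℓ̇, and let ψ be a bounded measurable function. Then ε⁻¹ ∫ ψ (p - p_ε) dν → -∫ ψ p ℓ̇ dν as ε ↓ 0. Equivalently, ε⁻¹ (P - P_ε)[ψ] → -P[ψ ℓ̇]. -/
/-! With `s_ε = √p_ε`, `t = √p` and `g = ½ ℓ t`, differentiability in quadratic mean says that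
`u_ε = (s_ε - t) / ε → g` in `L²(ν)`. As `s_ε - t = ε u_ε` with `‖u_ε‖₂` bounded, also
`s_ε + t → 2 t` in `L²`. Products of `L²`-convergent families converge in `L¹`, so
`(p_ε - p) / ε = u_ε (s_ε + t) → 2 g t = p ℓ` in `L¹(ν)`, and integrating against the bounded `ψ`
preserves the limit. -/

open Filter Topology

namespace MeasureTheory

variable {α : Type*} [MeasurableSpace α] {μ : Measure α}

lemma Integrable.memLp_two_sqrt {f : α → ℝ} (hf : Integrable f μ) (h0 : ∀ x, 0 ≤ f x) :
    MemLp (fun x => √(f x)) 2 μ :=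
  (memLp_two_iff_integrable_sq hf.aemeasurable.sqrt.aestronglyMeasurable).2 <|
    hf.congr (ae_of_all _ fun x => (Real.sq_sqrt (h0 x)).symm)

lemma integral_abs_mul_le_sqrt_mul_sqrt {f g : α → ℝ} (hf : MemLp f 2 μ) (hg : MemLp g 2 μ) :
    ∫ x, |f x * g x| ∂μ ≤ √(∫ x, f x ^ 2 ∂μ) * √(∫ x, g x ^ 2 ∂μ) := by
  have h := integral_mul_norm_le_Lp_mul_Lq Real.HolderConjugate.two_two
    (by simpa using hf) (by simpa using hg)
  simp only [Real.norm_eq_abs, ← abs_mul, one_div, Real.rpow_two, sq_abs] at h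
  simpa only [Real.sqrt_eq_rpow, one_div] using h

lemma integral_abs_mul_sub_mul_le {a a' b b' : α → ℝ} (ha : MemLp a 2 μ) (ha' : MemLp a' 2 μ)
    (hb : MemLp b 2 μ) (hb' : MemLp b' 2 μ) :
    ∫ x, |a' x * b' x - a x * b x| ∂μ ≤
      √(∫ x, (a' x - a x) ^ 2 ∂μ) * √(∫ x, (b' x - b x) ^ 2 ∂μ)
        + √(∫ x, (a' x - a x) ^ 2 ∂μ) * √(∫ x, b x ^ 2 ∂μ)
        + √(∫ x, a x ^ 2 ∂μ) * √(∫ x, (b' x - b x) ^ 2 ∂μ) := by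
  have hda := ha'.sub ha
  have hdb := hb'.sub hb
  have i1 : Integrable (fun x => |(a' x - a x) * (b' x - b x)|) μ :=
    (hda.integrable_mul hdb).abs
  have i2 : Integrable (fun x => |(a' x - a x) * b x|) μ := (hda.integrable_mul hb).abs
  have i3 : Integrable (fun x => |a x * (b' x - b x)|) μ := (ha.integrable_mul hdb).abs
  calc ∫ x, |a' x * b' x - a x * b x| ∂μ
      ≤ ∫ x, (|(a' x - a x) * (b' x - b x)| + |(a' x - a x) * b x| + |a x * (b' x - b x)|) ∂μ := by
        refine integral_mono_of_nonneg (ae_of_all _ fun x => abs_nonneg _) ((i1.add i2).add i3)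
          (ae_of_all _ fun x => ?_)
        have : a' x * b' x - a x * b x =
            (a' x - a x) * (b' x - b x) + (a' x - a x) * b x + a x * (b' x - b x) := by ring
        dsimp only
        rw [this]
        exact (abs_add_le _ _).trans (add_le_add_left (abs_add_le _ _) _) |>.trans_eq (by ring)
    _ = ∫ x, |(a' x - a x) * (b' x - b x)| ∂μ + ∫ x, |(a' x - a x) * b x| ∂μ
          + ∫ x, |a x * (b' x - b x)| ∂μ := by
        have i12 : Integrable (fun x => |(a' x - a x) * (b' x - b x)| + |(a' x - a x) * b x|) μ :=
          i1.add i2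
        rw [integral_add i12 i3, integral_add i1 i2]
    _ ≤ _ := by
        gcongr
        · exact integral_abs_mul_le_sqrt_mul_sqrt hda hdb
        · exact integral_abs_mul_le_sqrt_mul_sqrt hda hb
        · exact integral_abs_mul_le_sqrt_mul_sqrt ha hdb

lemma Integrable.mul_of_integrable_mul_sq {p ℓ : α → ℝ} (hp : Integrable p μ) (hp0 : ∀ x, 0 ≤ p x)
    (hℓ : AEMeasurable ℓ μ) (hpℓ : Integrable (fun x => p x * ℓ x ^ 2) μ) :
    Integrable (fun x => p x * ℓ x) μ := by
  refine ((hp.add hpℓ).div_const 2).mono' (hp.aemeasurable.mul hℓ).aestronglyMeasurable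
    (ae_of_all _ fun x => ?_)
  have hℓx : 2 * |ℓ x| ≤ 1 + ℓ x ^ 2 := by nlinarith [sq_nonneg (|ℓ x| - 1), sq_abs (ℓ x)]
  show |p x * ℓ x| ≤ (p x + p x * ℓ x ^ 2) / 2
  rw [abs_mul, abs_of_nonneg (hp0 x)]
  nlinarith [mul_le_mul_of_nonneg_left hℓx (hp0 x)]

lemma tendsto_integral_abs_mul_sub_mul {ι : Type*} {l : Filter ι} {a b : α → ℝ}
    {A B : ι → α → ℝ} (ha : MemLp a 2 μ) (hb : MemLp b 2 μ) (hA : ∀ᶠ i in l, MemLp (A i) 2 μ)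
    (hB : ∀ᶠ i in l, MemLp (B i) 2 μ)
    (hAa : Tendsto (fun i => ∫ x, (A i x - a x) ^ 2 ∂μ) l (𝓝 0))
    (hBb : Tendsto (fun i => ∫ x, (B i x - b x) ^ 2 ∂μ) l (𝓝 0)) :
    Tendsto (fun i => ∫ x, |A i x * B i x - a x * b x| ∂μ) l (𝓝 0) := by
  have hbound := ((hAa.sqrt.mul hBb.sqrt).add (hAa.sqrt.mul_const √(∫ x, b x ^ 2 ∂μ))).add
    (hBb.sqrt.const_mul √(∫ x, a x ^ 2 ∂μ))
  simp only [Real.sqrt_zero, mul_zero, zero_mul, add_zero] at hbound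
  refine squeeze_zero' (Eventually.of_forall fun i => integral_nonneg fun x => abs_nonneg _) ?_
    hbound
  filter_upwards [hA, hB] with i hAi hBi
  exact integral_abs_mul_sub_mul_le ha hAi hb hBi

lemma tendsto_integral_sq_mul_of_tendsto_zero {ι : Type*} {l : Filter ι} {c : ι → ℝ} {g : α → ℝ}
    {U : ι → α → ℝ} (hc : Tendsto c l (𝓝 0)) (hg : MemLp g 2 μ) (hU : ∀ᶠ i in l, MemLp (U i) 2 μ)
    (hUg : Tendsto (fun i => ∫ x, (U i x - g x) ^ 2 ∂μ) l (𝓝 0)) :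
    Tendsto (fun i => ∫ x, (c i * U i x) ^ 2 ∂μ) l (𝓝 0) := by
  have hbound := (hc.pow 2).mul ((hUg.const_mul 2).add_const (2 * ∫ x, g x ^ 2 ∂μ))
  simp only [ne_eq, OfNat.ofNat_ne_zero, not_false_eq_true, zero_pow, zero_mul] at hbound
  refine squeeze_zero' (Eventually.of_forall fun i => integral_nonneg fun x => sq_nonneg _) ?_
    hbound
  filter_upwards [hU] with i hUi
  have hsq {f : α → ℝ} (hf : MemLp f 2 μ) : Integrable (fun x => f x ^ 2) μ :=
    (memLp_two_iff_integrable_sq hf.1).1 hf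
  have hUg2 : Integrable (fun x => (U i x - g x) ^ 2) μ := hsq (hUi.sub hg)
  have hg2 := hsq hg
  calc ∫ x, (c i * U i x) ^ 2 ∂μ = c i ^ 2 * ∫ x, U i x ^ 2 ∂μ := by
        simp_rw [mul_pow]; exact integral_const_mul _ _
    _ ≤ c i ^ 2 * ∫ x, (2 * (U i x - g x) ^ 2 + 2 * g x ^ 2) ∂μ := by
        gcongr
        · exact hsq hUi
        · exact (hUg2.const_mul 2).add (hg2.const_mul 2)
        · intro x
          nlinarith [sq_nonneg (U i x - 2 * g x)]
    _ = _ := by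
        rw [integral_add (hUg2.const_mul 2) (hg2.const_mul 2), integral_const_mul,
          integral_const_mul]

lemma tendsto_integral_mul_of_tendsto_integral_abs_sub {ι : Type*} {l : Filter ι}
    {ψ f : α → ℝ} {F : ι → α → ℝ} {M : ℝ} (hψ : AEStronglyMeasurable ψ μ)
    (hψM : ∀ᵐ x ∂μ, |ψ x| ≤ M) (hf : Integrable f μ) (hF : ∀ᶠ i in l, Integrable (F i) μ)
    (hFf : Tendsto (fun i => ∫ x, |F i x - f x| ∂μ) l (𝓝 0)) :
    Tendsto (fun i => ∫ x, ψ x * F i x ∂μ) l (𝓝 (∫ x, ψ x * f x ∂μ)) := by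
  rw [tendsto_iff_norm_sub_tendsto_zero]
  refine squeeze_zero' (.of_forall fun i => norm_nonneg _) ?_ (by simpa using hFf.const_mul M)
  filter_upwards [hF] with i hFi
  rw [← integral_const_mul, ← integral_sub (hFi.bdd_mul hψ hψM) (hf.bdd_mul hψ hψM)]
  refine norm_integral_le_of_norm_le ((hFi.sub hf).abs.const_mul M) ?_
  filter_upwards [hψM] with x hx
  rw [← mul_sub, norm_mul, Real.norm_eq_abs, Real.norm_eq_abs]
  exact mul_le_mul_of_nonneg_right hx (abs_nonneg _)

theorem tendsto_integral_abs_diffQuot_sub_of_qmd {l : Filter ℝ} (hl : l ≤ 𝓝[≠] 0)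
    {p ℓ : α → ℝ} {pe : ℝ → α → ℝ} (hℓ : AEMeasurable ℓ μ)
    (hp0 : ∀ x, 0 ≤ p x) (hpe0 : ∀ ε x, 0 ≤ pe ε x)
    (hpint : ∫ x, p x ∂μ = 1) (hpeint : ∀ ε, ∫ x, pe ε x ∂μ = 1)
    (hℓL2 : Integrable (fun x => p x * ℓ x ^ 2) μ)
    (hqmd : Tendsto (fun ε => ∫ x, ((√(pe ε x) - √(p x)) / ε - 1 / 2 * ℓ x * √(p x)) ^ 2 ∂μ)
      l (𝓝 0)) :
    Tendsto (fun ε => ∫ x, |(pe ε x - p x) / ε - p x * ℓ x| ∂μ) l (𝓝 0) := by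
  have ht : MemLp (fun x => √(p x)) 2 μ :=
    Integrable.memLp_two_sqrt (.of_integral_ne_zero (by simp [hpint])) hp0
  have hs ε : MemLp (fun x => √(pe ε x)) 2 μ :=
    Integrable.memLp_two_sqrt (.of_integral_ne_zero (by simp [hpeint])) (hpe0 ε)
  have hg : MemLp (fun x => 1 / 2 * ℓ x * √(p x)) 2 μ := by
    refine (memLp_two_iff_integrable_sq (f := fun x => 1 / 2 * ℓ x * √(p x))
      ((hℓ.const_mul _).mul ht.1.aemeasurable).aestronglyMeasurable).2
      ((hℓL2.const_mul (1 / 4)).congr (ae_of_all _ fun x => ?_))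
    linear_combination (-(1 / 4) * ℓ x ^ 2) * Real.sq_sqrt (hp0 x)
  have hu ε : MemLp (fun x => (√(pe ε x) - √(p x)) / ε) 2 μ := by
    simpa only [div_eq_mul_inv, Pi.sub_apply] using ((hs ε).sub ht).mul_const ε⁻¹
  have hst : Tendsto (fun ε => ∫ x, (√(pe ε x) + √(p x) - 2 * √(p x)) ^ 2 ∂μ) l (𝓝 0) := by
    refine (tendsto_integral_sq_mul_of_tendsto_zero (hl.trans nhdsWithin_le_nhds) hg
      (.of_forall hu) hqmd).congr' ?_
    filter_upwards [hl self_mem_nhdsWithin] with ε (hε : ε ≠ 0)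
    congr with x
    field_simp
    ring
  refine (tendsto_integral_abs_mul_sub_mul (B := fun ε x => √(pe ε x) + √(p x)) hg
    (ht.const_mul 2) (.of_forall hu) (.of_forall fun ε => (hs ε).add ht) hqmd hst).congr
    fun ε => integral_congr_ae (ae_of_all _ fun x => ?_)
  dsimp only
  congr 1
  linear_combination (1 / ε) * Real.sq_sqrt (hpe0 ε x) - (1 / ε + ℓ x) * Real.sq_sqrt (hp0 x)

end MeasureTheory

open MeasureTheory

theorem stmt4_general {𝒪 : Type*} [MeasurableSpace 𝒪] (ν : Measure 𝒪)
    (p : 𝒪 → ℝ) (pe : ℝ → 𝒪 → ℝ) (ℓ ψ : 𝒪 → ℝ)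
    (hℓ : Measurable ℓ)
    (hψ : Measurable ψ) (Mψ : ℝ) (hψbd : ∀ x, |ψ x| ≤ Mψ)
    (hp0 : ∀ x, 0 ≤ p x) (hpe0 : ∀ ε x, 0 ≤ pe ε x)
    (hpint : ∫ x, p x ∂ν = 1) (hpeint : ∀ ε, ∫ x, pe ε x ∂ν = 1)
    (hℓL2 : Integrable (fun x => p x * ℓ x ^ 2) ν)
    (hqmd : Tendsto (fun ε => ∫ x, ((Real.sqrt (pe ε x) - Real.sqrt (p x)) / ε
        - (1/2) * ℓ x * Real.sqrt (p x)) ^ 2 ∂ν) (nhdsWithin 0 (Set.Ioi 0)) (nhds 0)) :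
    Tendsto (fun ε => ((∫ x, ψ x * p x ∂ν) - ∫ x, ψ x * pe ε x ∂ν) / ε)
      (nhdsWithin 0 (Set.Ioi 0)) (nhds (-(∫ x, ψ x * (p x * ℓ x) ∂ν))) := by
  have hpI : Integrable p ν := .of_integral_ne_zero (by simp [hpint])
  have hpeI ε : Integrable (pe ε) ν := .of_integral_ne_zero (by simp [hpeint])
  have hψM : ∀ᵐ x ∂ν, |ψ x| ≤ Mψ := .of_forall hψbd
  have hL1 := tendsto_integral_abs_diffQuot_sub_of_qmd
    (nhdsWithin_mono _ fun ε (hε : 0 < ε) => hε.ne') hℓ.aemeasurable hp0 hpe0 hpint hpeint hℓL2 hqmd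
  refine (tendsto_integral_mul_of_tendsto_integral_abs_sub (F := fun ε x => (pe ε x - p x) / ε)
    hψ.aestronglyMeasurable hψM (hpI.mul_of_integrable_mul_sq hp0 hℓ.aemeasurable hℓL2)
    (.of_forall fun ε => ((hpeI ε).sub hpI).div_const ε) hL1).neg.congr fun ε => ?_
  simp_rw [mul_div_assoc', mul_sub]
  rw [integral_div, integral_sub ((hpeI ε).bdd_mul hψ.aestronglyMeasurable hψM)
    (hpI.bdd_mul hψ.aestronglyMeasurable hψM)]
  ring

theorem stmt4 {𝒪 : Type*} [MeasurableSpace 𝒪] (ν : Measure 𝒪) [SigmaFinite ν]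
    (p : 𝒪 → ℝ) (pe : ℝ → 𝒪 → ℝ) (ℓ ψ : 𝒪 → ℝ)
    (hp : Measurable p) (hpe : ∀ ε, Measurable (pe ε)) (hℓ : Measurable ℓ)
    (hψ : Measurable ψ) (Mψ : ℝ) (hψbd : ∀ x, |ψ x| ≤ Mψ)
    (hp0 : ∀ x, 0 ≤ p x) (hpe0 : ∀ ε x, 0 ≤ pe ε x)
    (hpint : ∫ x, p x ∂ν = 1) (hpeint : ∀ ε, ∫ x, pe ε x ∂ν = 1)
    (hℓL2 : Integrable (fun x => p x * ℓ x ^ 2) ν)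
    (hqmd : Tendsto (fun ε => ∫ x, ((Real.sqrt (pe ε x) - Real.sqrt (p x)) / ε
        - (1/2) * ℓ x * Real.sqrt (p x)) ^ 2 ∂ν) (nhdsWithin 0 (Set.Ioi 0)) (nhds 0)) :
    Tendsto (fun ε => ((∫ x, ψ x * p x ∂ν) - ∫ x, ψ x * pe ε x ∂ν) / ε)
      (nhdsWithin 0 (Set.Ioi 0)) (nhds (-(∫ x, ψ x * (p x * ℓ x) ∂ν))) :=
  stmt4_general ν p pe ℓ ψ hℓ hψ Mψ hψbd hp0 hpe0 hpint hpeint hℓL2 hqmd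
end

section
/- Let τ, τ_ε be measurable functions on a probability space (Ω, P) with |τ|, |τ_ε| ≤ 1, and suppose sup_w |τ(w) - τ_ε(w)| ≤ Cε for some constant C. Let α ∈ ℝ, r ≥ 1, and suppose the CDF γ of τ (under P) is continuous at α. Then E[ |1{τ ≤ α} - 1{τ_ε ≤ α}| · |α - τ_ε|^r ] = o(ε) as ε ↓ 0. -/
/-!
Where the two indicators disagree, `α` lies between `τ` and `τ_ε`, so both `|τ - α|` and
`|α - τ_ε|` are at most `Cε`; for small `ε` also `|α - τ_ε| ^ r ≤ |α - τ_ε|`. Hence the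
expectation is at most `Cε · P(|τ - α| ≤ Cε)`, and the probability tends to `0` because the law
of `τ` has no atom at `α`.
-/

open MeasureTheory Filter Asymptotics

open Set Topology

lemma tendsto_measure_Icc_of_measure_singleton_eq_zero (μ : Measure ℝ)
    [IsFiniteMeasureOnCompacts μ] {b : ℝ} (hb : μ {b} = 0) :
    Tendsto (fun δ ↦ μ (Icc (b - δ) (b + δ))) (𝓝 0) (𝓝 0) := by
  rw [← nhdsLT_sup_nhdsGE, tendsto_sup]
  constructor
  · apply tendsto_const_nhds.congr'
    filter_upwards [self_mem_nhdsWithin] with δ (hδ : δ < 0)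
    rw [Icc_eq_empty (by linarith), measure_empty]
  · simpa only [hb] using tendsto_measure_Icc_nhdsWithin_right μ b

lemma abs_sub_le_of_not_le_iff_le {a b α : ℝ} (h : ¬(a ≤ α ↔ b ≤ α)) :
    |α - a| ≤ |a - b| ∧ |α - b| ≤ |a - b| := by
  have hbetween : (a ≤ α ∧ α < b) ∨ (b ≤ α ∧ α < a) := by
    by_cases ha : a ≤ α <;> by_cases hb : b ≤ α <;> simp_all
  rw [abs_le, abs_le]
  rcases hbetween with ⟨h₁, h₂⟩ | ⟨h₁, h₂⟩ <;>
    refine ⟨⟨?_, ?_⟩, ?_, ?_⟩ <;> linarith [le_abs_self (a - b), neg_abs_le (a - b)]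

lemma abs_ite_sub_ite_mul_rpow_le {a b α δ r : ℝ} (hr : 1 ≤ r) (hδ : δ ≤ 1)
    (hab : |a - b| ≤ δ) :
    |(if a ≤ α then (1 : ℝ) else 0) - (if b ≤ α then 1 else 0)| * |α - b| ^ r ≤
      (Icc (α - δ) (α + δ)).indicator (fun _ ↦ δ) a := by
  by_cases hsame : a ≤ α ↔ b ≤ α
  · have hδ0 : 0 ≤ δ := (abs_nonneg _).trans hab
    have hind_eq : (if a ≤ α then (1 : ℝ) else 0) = if b ≤ α then 1 else 0 := by
      simp only [hsame]
    rw [hind_eq, sub_self, abs_zero, zero_mul]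
    exact indicator_nonneg (fun _ _ ↦ hδ0) a
  · obtain ⟨ha, hb⟩ := abs_sub_le_of_not_le_iff_le hsame
    have hbδ : |α - b| ≤ δ := hb.trans hab
    have hind : |(if a ≤ α then (1 : ℝ) else 0) - (if b ≤ α then 1 else 0)| ≤ 1 := by
      split_ifs <;> norm_num
    have hpow : |α - b| ^ r ≤ δ :=
      calc |α - b| ^ r ≤ |α - b| ^ (1 : ℝ) :=
            Real.rpow_le_rpow_of_exponent_ge' (abs_nonneg _) (hbδ.trans hδ) zero_le_one hr
        _ = |α - b| := Real.rpow_one _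
        _ ≤ δ := hbδ
    rw [indicator_of_mem (mem_Icc_iff_abs_le.1 (ha.trans hab))]
    calc _ ≤ 1 * δ := mul_le_mul hind hpow (by positivity) zero_le_one
      _ = δ := one_mul δ

lemma integral_abs_ite_sub_ite_mul_rpow_le {Ω : Type*} [MeasurableSpace Ω] (P : Measure Ω)
    [IsFiniteMeasure P] {τ T : Ω → ℝ} (hτ : Measurable τ) {α δ r : ℝ} (hr : 1 ≤ r)
    (hδ : δ ≤ 1) (hτT : ∀ ω, |τ ω - T ω| ≤ δ) :
    ∫ ω, |(if τ ω ≤ α then (1 : ℝ) else 0) - (if T ω ≤ α then 1 else 0)| * |α - T ω| ^ r ∂P ≤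
      δ * (P.map τ).real (Icc (α - δ) (α + δ)) := by
  have hIcc : MeasurableSet (τ ⁻¹' Icc (α - δ) (α + δ)) := hτ measurableSet_Icc
  calc _ ≤ ∫ ω, (τ ⁻¹' Icc (α - δ) (α + δ)).indicator (fun _ ↦ δ) ω ∂P := by
        refine integral_mono_of_nonneg (.of_forall fun ω ↦ by positivity)
          ((integrable_const δ).indicator hIcc) (.of_forall fun ω ↦ ?_)
        exact (abs_ite_sub_ite_mul_rpow_le hr hδ (hτT ω)).trans_eq
          (indicator_comp_right τ (g := fun _ ↦ δ)).symm
    _ = δ * (P.map τ).real (Icc (α - δ) (α + δ)) := by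
        rw [integral_indicator_const _ hIcc, smul_eq_mul, mul_comm,
          map_measureReal_apply hτ measurableSet_Icc]

theorem stmt8_general {Ω : Type*} [MeasurableSpace Ω] (P : Measure Ω) [IsProbabilityMeasure P]
    (τ : Ω → ℝ) (T : ℝ → Ω → ℝ) (hτ : Measurable τ)
    (C : ℝ) (hsup : ∀ ε > 0, ∀ ω, |τ ω - T ε ω| ≤ C * ε)
    (α r : ℝ) (hr : 1 ≤ r) (hatom : P {ω | τ ω = α} = 0) :
    (fun ε => ∫ ω, |(if τ ω ≤ α then (1:ℝ) else 0) - (if T ε ω ≤ α then 1 else 0)|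
        * |α - T ε ω| ^ r ∂P) =o[nhdsWithin 0 (Set.Ioi 0)] (fun ε => ε) := by
  have hα : P.map τ {α} = 0 := by rwa [Measure.map_apply hτ (measurableSet_singleton α)]
  have hCε : Tendsto (fun ε ↦ C * ε) (𝓝[>] 0) (𝓝 0) := by
    simpa using ((continuous_const_mul C).tendsto 0).mono_left nhdsWithin_le_nhds
  have hmass : Tendsto (fun ε ↦ C * (P.map τ).real (Icc (α - C * ε) (α + C * ε)))
      (𝓝[>] 0) (𝓝 0) := by
    simpa [measureReal_def] using (((ENNReal.tendsto_toReal ENNReal.zero_ne_top).comp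
      (tendsto_measure_Icc_of_measure_singleton_eq_zero _ hα)).comp hCε).const_mul C
  have hbound : (fun ε ↦ ∫ ω, |(if τ ω ≤ α then (1:ℝ) else 0) - (if T ε ω ≤ α then 1 else 0)|
      * |α - T ε ω| ^ r ∂P) =O[𝓝[>] 0]
      fun ε ↦ ε * (C * (P.map τ).real (Icc (α - C * ε) (α + C * ε))) := by
    refine IsBigO.of_bound' ?_
    filter_upwards [self_mem_nhdsWithin, hCε.eventually (eventually_le_nhds one_pos)]
      with ε hε hCε1
    rw [Real.norm_of_nonneg (integral_nonneg fun ω ↦ by positivity), ← mul_assoc, mul_comm ε]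
    exact (integral_abs_ite_sub_ite_mul_rpow_le P hτ hr hCε1 (hsup ε hε)).trans (le_abs_self _)
  simpa using
    hbound.trans_isLittleO ((isBigO_refl _ _).mul_isLittleO ((isLittleO_one_iff ℝ).2 hmass))

theorem stmt8 {Ω : Type*} [MeasurableSpace Ω] (P : Measure Ω) [IsProbabilityMeasure P]
    (τ : Ω → ℝ) (T : ℝ → Ω → ℝ) (hτ : Measurable τ) (hT : ∀ ε, Measurable (T ε))
    (hbd : ∀ ω, |τ ω| ≤ 1) (hbdT : ∀ ε ω, |T ε ω| ≤ 1)
    (C : ℝ) (hC : 0 < C) (hsup : ∀ ε > 0, ∀ ω, |τ ω - T ε ω| ≤ C * ε)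
    (α r : ℝ) (hr : 1 ≤ r) (hatom : P {ω | τ ω = α} = 0) :
    (fun ε => ∫ ω, |(if τ ω ≤ α then (1:ℝ) else 0) - (if T ε ω ≤ α then 1 else 0)|
        * |α - T ε ω| ^ r ∂P) =o[nhdsWithin 0 (Set.Ioi 0)] (fun ε => ε) :=
  stmt8_general P τ T hτ C hsup α r hr hatom
end

section
/- Let P, P' be probability measures on a common space, with propensity functions π, π' : 𝒲 → [c, 1-c] for some c ∈ (0, 1/2), outcome regressions μ, μ' : {0,1} × 𝒲 → [0,1], CATE functions τ = μ(1,·) - μ(0,·), τ' = μ'(1,·) - μ'(0,·), and sublevel indicators η_α = 1{τ ≤ α}, η'_α = 1{τ' ≤ α}. Define Rem_α(P', P) = E_P[ (η'_α/π')(π - π')(μ(1,·) - μ'(1,·)) ] + E_P[ (η'_α/(1 - π'))(π' - π)(μ(0,·) - μ'(0,·)) ] + E_P[ (η'_α - η_α)(α - τ) ]. Then |Rem_α(P', P)| ≤ E_P[ |η'_α - η_α| · |τ' - τ| ] + √2 c⁻¹ ‖π' - π‖_{L²(P)} ‖μ' - μ‖_{L²(P)}, where ‖μ' - μ‖²_{L²(P)}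 = E_P[(μ'(1,W)-μ(1,W))²] + E_P[(μ'(0,W)-μ(0,W))²]. -/
open MeasureTheory Set

/-! The weights `η'/π'` and `η'/(1 - π')` are bounded by `c⁻¹`, so the first two terms are at most
`c⁻¹ ∫ |π' - π| |μ'(a) - μ(a)|`; Cauchy–Schwarz and `√x + √y ≤ √2 √(x + y)` turn these into the
product of `L²` norms. In the third term the two indicators differ only when `α` lies between `τ`
and `τ'`, and then `|α - τ| ≤ |τ' - τ|`. -/

theorem sqrt_add_sqrt_le_sqrt_two_mul_sqrt_add {x y : ℝ} (hx : 0 ≤ x) (hy : 0 ≤ y) :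
    √x + √y ≤ √2 * √(x + y) := by
  rw [← Real.sqrt_mul zero_le_two, Real.le_sqrt (by positivity) (by positivity)]
  nlinarith [Real.sq_sqrt hx, Real.sq_sqrt hy, sq_nonneg (√x - √y)]

theorem abs_sublevel_indicator_sub_mul_le (t t' α : ℝ) :
    |((if t' ≤ α then (1 : ℝ) else 0) - if t ≤ α then 1 else 0) * (α - t)|
      ≤ |(if t' ≤ α then (1 : ℝ) else 0) - if t ≤ α then 1 else 0| * |t' - t| := by
  rw [abs_mul]
  split_ifs <;> norm_num <;> rw [abs_le] <;> constructor <;>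
    linarith [le_abs_self (t' - t), neg_abs_le (t' - t)]

section L2

variable {Ω : Type*} [MeasurableSpace Ω] {P : Measure Ω}

theorem integrable_abs_mul_abs_of_memLp_two {f g : Ω → ℝ} (hf : MemLp f 2 P) (hg : MemLp g 2 P) :
    Integrable (fun w => |f w| * |g w|) P := by
  simpa only [Pi.mul_apply, abs_mul] using (hf.integrable_mul hg).abs

theorem integral_abs_mul_abs_le_sqrt_mul_sqrt {f g : Ω → ℝ} (hf : MemLp f 2 P)
    (hg : MemLp g 2 P) :
    ∫ w, |f w| * |g w| ∂P ≤ √(∫ w, f w ^ 2 ∂P) * √(∫ w, g w ^ 2 ∂P) := by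
  have h := integral_mul_le_Lp_mul_Lq_of_nonneg Real.HolderConjugate.two_two
    (ae_of_all P fun w => abs_nonneg (f w)) (ae_of_all P fun w => abs_nonneg (g w))
    (by rw [ENNReal.ofReal_ofNat]; exact hf.abs) (by rw [ENNReal.ofReal_ofNat]; exact hg.abs)
  simpa only [Real.rpow_two, sq_abs, Real.sqrt_eq_rpow] using h

theorem abs_integral_mul_mul_le_of_abs_le {g f h : Ω → ℝ} {C : ℝ} (hC : 0 ≤ C)
    (hgC : ∀ w, |g w| ≤ C) (hf : MemLp f 2 P) (hh : MemLp h 2 P) :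
    |∫ w, g w * f w * h w ∂P| ≤ C * (√(∫ w, f w ^ 2 ∂P) * √(∫ w, h w ^ 2 ∂P)) :=
  calc |∫ w, g w * f w * h w ∂P|
      ≤ ∫ w, C * (|f w| * |h w|) ∂P := by
        rw [← Real.norm_eq_abs]
        refine norm_integral_le_of_norm_le
          ((integrable_abs_mul_abs_of_memLp_two hf hh).const_mul C) (ae_of_all P fun w => ?_)
        rw [Real.norm_eq_abs, abs_mul, abs_mul, mul_assoc]
        exact mul_le_mul_of_nonneg_right (hgC w) (by positivity)
    _ = C * ∫ w, |f w| * |h w| ∂P := integral_const_mul C _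
    _ ≤ C * (√(∫ w, f w ^ 2 ∂P) * √(∫ w, h w ^ 2 ∂P)) :=
        mul_le_mul_of_nonneg_left (integral_abs_mul_abs_le_sqrt_mul_sqrt hf hh) hC

theorem abs_integral_mul_mul_add_abs_integral_mul_mul_le {g₁ g₂ f h₁ h₂ : Ω → ℝ} {C : ℝ}
    (hC : 0 ≤ C) (hg₁ : ∀ w, |g₁ w| ≤ C) (hg₂ : ∀ w, |g₂ w| ≤ C) (hf : MemLp f 2 P)
    (hh₁ : MemLp h₁ 2 P) (hh₂ : MemLp h₂ 2 P) :
    |∫ w, g₁ w * f w * h₁ w ∂P| + |∫ w, g₂ w * f w * h₂ w ∂P|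
      ≤ √2 * C * √(∫ w, f w ^ 2 ∂P) * √(∫ w, h₁ w ^ 2 ∂P + ∫ w, h₂ w ^ 2 ∂P) :=
  calc |∫ w, g₁ w * f w * h₁ w ∂P| + |∫ w, g₂ w * f w * h₂ w ∂P|
      ≤ C * (√(∫ w, f w ^ 2 ∂P) * √(∫ w, h₁ w ^ 2 ∂P))
        + C * (√(∫ w, f w ^ 2 ∂P) * √(∫ w, h₂ w ^ 2 ∂P)) :=
        add_le_add (abs_integral_mul_mul_le_of_abs_le hC hg₁ hf hh₁)
          (abs_integral_mul_mul_le_of_abs_le hC hg₂ hf hh₂)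
    _ = C * √(∫ w, f w ^ 2 ∂P) * (√(∫ w, h₁ w ^ 2 ∂P) + √(∫ w, h₂ w ^ 2 ∂P)) := by ring
    _ ≤ C * √(∫ w, f w ^ 2 ∂P) * (√2 * √(∫ w, h₁ w ^ 2 ∂P + ∫ w, h₂ w ^ 2 ∂P)) := by
        gcongr
        exact sqrt_add_sqrt_le_sqrt_two_mul_sqrt_add (integral_nonneg fun w => sq_nonneg _)
          (integral_nonneg fun w => sq_nonneg _)
    _ = √2 * C * √(∫ w, f w ^ 2 ∂P) * √(∫ w, h₁ w ^ 2 ∂P + ∫ w, h₂ w ^ 2 ∂P) := by ring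

theorem memLp_sublevel_indicator [IsFiniteMeasure P] {f : Ω → ℝ} (hf : Measurable f) (α : ℝ)
    (p : ENNReal) : MemLp (fun w => if f w ≤ α then (1 : ℝ) else 0) p P :=
  memLp_of_bounded (a := 0) (b := 1) (ae_of_all P fun w => by split_ifs <;> norm_num)
    (Measurable.ite (measurableSet_le hf measurable_const) measurable_const
      measurable_const).aestronglyMeasurable p

theorem abs_integral_sublevel_indicator_sub_mul_le [IsFiniteMeasure P] {f f' : Ω → ℝ}
    (hf : Measurable f) (hf' : Measurable f') (hΔ : MemLp (fun w => f' w - f w) 2 P) (α : ℝ) :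
    |∫ w, ((if f' w ≤ α then (1 : ℝ) else 0) - if f w ≤ α then 1 else 0) * (α - f w) ∂P|
      ≤ ∫ w, |(if f' w ≤ α then (1 : ℝ) else 0) - if f w ≤ α then 1 else 0| * |f' w - f w| ∂P := by
  rw [← Real.norm_eq_abs]
  refine norm_integral_le_of_norm_le (integrable_abs_mul_abs_of_memLp_two ?_ hΔ)
    (ae_of_all P fun w => abs_sublevel_indicator_sub_mul_le (f w) (f' w) α)
  exact (memLp_sublevel_indicator hf' α 2).sub (memLp_sublevel_indicator hf α 2)

end L2

theorem abs_div_le_inv_of_abs_le_one {x p c : ℝ} (hx : |x| ≤ 1) (hc : 0 < c) (hp : c ≤ p) :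
    |x / p| ≤ c⁻¹ := by
  rw [abs_div, abs_of_pos (hc.trans_le hp), ← one_div]
  exact div_le_div₀ zero_le_one hx hc hp

theorem stmt10_general {𝒲 : Type*} [MeasurableSpace 𝒲] (P : Measure 𝒲) [IsProbabilityMeasure P]
    (c : ℝ) (hc : 0 < c)
    (π π' : 𝒲 → ℝ) (μ μ' : Bool → 𝒲 → ℝ)
    (hπ : Measurable π) (hπ' : Measurable π')
    (hμ : ∀ a, Measurable (μ a)) (hμ' : ∀ a, Measurable (μ' a))
    (hπbd : ∀ w, π w ∈ Set.Icc c (1 - c)) (hπ'bd : ∀ w, π' w ∈ Set.Icc c (1 - c))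
    (hμbd : ∀ a w, μ a w ∈ Set.Icc (0:ℝ) 1) (hμ'bd : ∀ a w, μ' a w ∈ Set.Icc (0:ℝ) 1)
    (α : ℝ) :
    let τ : 𝒲 → ℝ := fun w => μ true w - μ false w
    let τ' : 𝒲 → ℝ := fun w => μ' true w - μ' false w
    let η : 𝒲 → ℝ := fun w => if τ w ≤ α then 1 else 0
    let η' : 𝒲 → ℝ := fun w => if τ' w ≤ α then 1 else 0
    |(∫ w, (η' w / π' w) * (π w - π' w) * (μ true w - μ' true w) ∂P)
      + (∫ w, (η' w / (1 - π' w)) * (π' w - π w) * (μ false w - μ' false w) ∂P)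
      + (∫ w, (η' w - η w) * (α - τ w) ∂P)|
      ≤ (∫ w, |η' w - η w| * |τ' w - τ w| ∂P)
        + Real.sqrt 2 / c * Real.sqrt (∫ w, (π' w - π w) ^ 2 ∂P)
          * Real.sqrt ((∫ w, (μ' true w - μ true w) ^ 2 ∂P)
              + (∫ w, (μ' false w - μ false w) ^ 2 ∂P)) := by
  intro τ τ' η η'
  have hL2 : ∀ a, MemLp (μ a) 2 P :=
    fun a => memLp_of_bounded (ae_of_all P (hμbd a)) (hμ a).aestronglyMeasurable 2
  have hL2' : ∀ a, MemLp (μ' a) 2 P :=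
    fun a => memLp_of_bounded (ae_of_all P (hμ'bd a)) (hμ' a).aestronglyMeasurable 2
  have hΔπ : MemLp (fun w => π' w - π w) 2 P :=
    (memLp_of_bounded (ae_of_all P hπ'bd) hπ'.aestronglyMeasurable 2).sub
      (memLp_of_bounded (ae_of_all P hπbd) hπ.aestronglyMeasurable 2)
  have hΔμ : ∀ a, MemLp (fun w => μ' a w - μ a w) 2 P := fun a => (hL2' a).sub (hL2 a)
  have hη' : ∀ w, |η' w| ≤ 1 := fun w => by simp only [η']; split_ifs <;> norm_num
  have h₁₂ : |∫ w, (η' w / π' w) * (π w - π' w) * (μ true w - μ' true w) ∂P|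
      + |∫ w, (η' w / (1 - π' w)) * (π' w - π w) * (μ false w - μ' false w) ∂P|
      ≤ √2 / c * √(∫ w, (π' w - π w) ^ 2 ∂P)
        * √((∫ w, (μ' true w - μ true w) ^ 2 ∂P) + (∫ w, (μ' false w - μ false w) ^ 2 ∂P)) := by
    convert abs_integral_mul_mul_add_abs_integral_mul_mul_le (inv_nonneg.2 hc.le)
      (g₁ := fun w => η' w / π' w) (g₂ := fun w => -(η' w / (1 - π' w)))
      (fun w => abs_div_le_inv_of_abs_le_one (hη' w) hc (hπ'bd w).1)
      (fun w => (abs_neg _).trans_le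
        (abs_div_le_inv_of_abs_le_one (hη' w) hc (by linarith [(hπ'bd w).2])))
      hΔπ (hΔμ true) (hΔμ false) using 4
    · ext w; ring
    · ext w; ring
    · ring
  have h₃ : |∫ w, (η' w - η w) * (α - τ w) ∂P| ≤ ∫ w, |η' w - η w| * |τ' w - τ w| ∂P :=
    abs_integral_sublevel_indicator_sub_mul_le ((hμ true).sub (hμ false))
      ((hμ' true).sub (hμ' false))
      (((hL2' true).sub (hL2' false)).sub ((hL2 true).sub (hL2 false))) α
  linarith [abs_add_three (∫ w, (η' w / π' w) * (π w - π' w) * (μ true w - μ' true w) ∂P)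
    (∫ w, (η' w / (1 - π' w)) * (π' w - π w) * (μ false w - μ' false w) ∂P)
    (∫ w, (η' w - η w) * (α - τ w) ∂P)]

theorem stmt10 {𝒲 : Type*} [MeasurableSpace 𝒲] (P : Measure 𝒲) [IsProbabilityMeasure P]
    (c : ℝ) (hc : 0 < c) (hc2 : c < 1/2)
    (π π' : 𝒲 → ℝ) (μ μ' : Bool → 𝒲 → ℝ)
    (hπ : Measurable π) (hπ' : Measurable π')
    (hμ : ∀ a, Measurable (μ a)) (hμ' : ∀ a, Measurable (μ' a))
    (hπbd : ∀ w, π w ∈ Set.Icc c (1 - c)) (hπ'bd : ∀ w, π' w ∈ Set.Icc c (1 - c))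
    (hμbd : ∀ a w, μ a w ∈ Set.Icc (0:ℝ) 1) (hμ'bd : ∀ a w, μ' a w ∈ Set.Icc (0:ℝ) 1)
    (α : ℝ) :
    let τ : 𝒲 → ℝ := fun w => μ true w - μ false w
    let τ' : 𝒲 → ℝ := fun w => μ' true w - μ' false w
    let η : 𝒲 → ℝ := fun w => if τ w ≤ α then 1 else 0
    let η' : 𝒲 → ℝ := fun w => if τ' w ≤ α then 1 else 0
    |(∫ w, (η' w / π' w) * (π w - π' w) * (μ true w - μ' true w) ∂P)
      + (∫ w, (η' w / (1 - π' w)) * (π' w - π w) * (μ false w - μ' false w) ∂P)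
      + (∫ w, (η' w - η w) * (α - τ w) ∂P)|
      ≤ (∫ w, |η' w - η w| * |τ' w - τ w| ∂P)
        + Real.sqrt 2 / c * Real.sqrt (∫ w, (π' w - π w) ^ 2 ∂P)
          * Real.sqrt ((∫ w, (μ' true w - μ true w) ^ 2 ∂P)
              + (∫ w, (μ' false w - μ false w) ^ 2 ∂P)) :=
  stmt10_general P c hc π π' μ μ' hπ hπ' hμ hμ' hπbd hπ'bd hμbd hμ'bd α
end

section
/- Let f, g : [a, b] → ℝ be bounded measurable and let f*, g* denote their increasing rearrangements (generalized inverses of x ↦ m({f ≤ x}), resp. g). Then ‖f* - g*‖_{L^p([a,b])} ≤ ‖f - g‖_{L^p([a,b])} for every p ∈ [1, ∞]. In particular, if g is nondecreasing (so g* = g a.e.), rearranging an estimator f of g weakly improves its L^p approximation error: ‖f* - g‖_{L^p} ≤ ‖f - g‖_{L^p}. -/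
open MeasureTheory Set ENNReal

/-- The increasing rearrangement of `f` on `[a,b]`:
`f*(α) = inf { x | volume {u ∈ [a,b] | f u ≤ x} ≥ α - a }`. -/
noncomputable def rearrangeOn (a b : ℝ) (f : ℝ → ℝ) : ℝ → ℝ := fun α =>
  sInf {x : ℝ | ENNReal.ofReal (α - a) ≤ volume {u ∈ Set.Icc a b | f u ≤ x}}

/-!
The rearrangement `f*` is the generalized inverse of the right-continuous distribution function
`F x = |{f ≤ x} ∩ (a, b]|`, so `{f* ≤ x} ∩ (a, b] = (a, a + F x]`. Hence `f*` and `f` are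
equimeasurable, and for all levels `s, t` the set `{f* ≤ s, t < g*}` is an interval of length
`(F s - G t)⁺ ≤ |{f ≤ s, t < g}|`.

For `1 ≤ p < ∞`, Taylor's formula for the convex function `r ↦ r ^ p` gives
`|x - y| ^ p = ∫∫ 1[min x y ≤ s, s + r < max x y] ds dν_p(r)` with `ν_p ≥ 0` its second
derivative. By Tonelli, `‖f - g‖_p ^ p` is a positive mixture of measures of the sets
`{f ≤ s, s + r < g} ∪ {g ≤ s, s + r < f}`, each of which can only shrink under rearrangement.
For `p = ∞`, `f ≤ g + c` a.e. implies `f* ≤ g* + c`. Finally, a nondecreasing `g` satisfies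
`g* ≤ g` on `(a, b]`, and `g*, g` have the same integral, so `g* = g` a.e.
-/

theorem le_measure_setOf_le_of_forall_gt {Ω : Type*} [MeasurableSpace Ω] {μ : Measure Ω}
    [IsFiniteMeasure μ] {f : Ω → ℝ} (hf : AEMeasurable f μ) {x : ℝ} {c : ℝ≥0∞}
    (h : ∀ y > x, c ≤ μ {ω | f ω ≤ y}) : c ≤ μ {ω | f ω ≤ x} := by
  have hlim := tendsto_measure_biInter_gt (μ := μ) (s := fun y => {ω | f ω ≤ y}) (a := x)
    (fun _ _ => hf.nullMeasurable measurableSet_Iic) (fun _ _ _ hij _ hω => le_trans hω hij)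
    ⟨x + 1, by linarith, measure_ne_top _ _⟩
  have hinter : ⋂ y > x, {ω | f ω ≤ y} = {ω | f ω ≤ x} := by
    ext ω
    simp only [mem_iInter, mem_ofPred_eq]
    exact ⟨le_of_forall_gt_imp_ge_of_dense, fun hω y hy => hω.trans hy.le⟩
  rw [hinter] at hlim
  exact ge_of_tendsto hlim (eventually_nhdsWithin_of_forall h)

theorem intervalIntegrable_rpow_sub_two_mul_sub {q d : ℝ} (hq : 1 < q) :
    IntervalIntegrable (fun r => q * (q - 1) * r ^ (q - 2) * (d - r)) volume 0 d :=
  ((intervalIntegral.intervalIntegrable_rpow' (by linarith)).const_mul _).mul_continuousOn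
    (continuousOn_const.sub continuousOn_id)

theorem integral_rpow_sub_two_mul_sub {q d : ℝ} (hq : 1 < q) (hd : 0 ≤ d) :
    ∫ r in (0 : ℝ)..d, q * (q - 1) * r ^ (q - 2) * (d - r) = d ^ q := by
  have hq₀ : q ≠ 0 := by positivity
  have hq₁ : q - 1 ≠ 0 := sub_ne_zero.mpr hq.ne'
  have hsplit : (fun r : ℝ => q * (q - 1) * r ^ (q - 2) * (d - r))
      = fun r => q * (q - 1) * (d * r ^ (q - 2) - r ^ (q - 1)) := by
    ext r
    have : r ^ (q - 1) = r ^ (q - 2) * r := by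
      rcases eq_or_ne r 0 with rfl | hr
      · simp [Real.zero_rpow hq₁]
      · rw [← Real.rpow_add_one hr]; ring_nf
    rw [this]; ring
  have hint₁ : IntervalIntegrable (fun r : ℝ => d * r ^ (q - 2)) volume 0 d :=
    (intervalIntegral.intervalIntegrable_rpow' (by linarith)).const_mul d
  have hint₂ : IntervalIntegrable (fun r : ℝ => r ^ (q - 1)) volume 0 d :=
    intervalIntegral.intervalIntegrable_rpow' (by linarith)
  rw [hsplit, intervalIntegral.integral_const_mul, intervalIntegral.integral_sub hint₁ hint₂,
    intervalIntegral.integral_const_mul, integral_rpow (Or.inl (by linarith)),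
    integral_rpow (Or.inl (by linarith)), show q - 2 + 1 = q - 1 by ring, sub_add_cancel,
    Real.zero_rpow hq₁, Real.zero_rpow hq₀]
  rcases hd.eq_or_lt with rfl | hd
  · simp [Real.zero_rpow hq₀]
  rw [Real.rpow_sub_one hd.ne' q]
  field_simp
  ring

/-- The distributional second derivative of `r ↦ (max r 0) ^ q`. -/
noncomputable def rpowMeasure (q : ℝ) : Measure ℝ :=
  if q = 1 then Measure.dirac 0
  else (volume.restrict (Ioi 0)).withDensity fun r => ENNReal.ofReal (q * (q - 1) * r ^ (q - 2))

instance (q : ℝ) : SFinite (rpowMeasure q) := by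
  unfold rpowMeasure; split <;> infer_instance

theorem ae_nonneg_rpowMeasure (q : ℝ) : ∀ᵐ r ∂rpowMeasure q, 0 ≤ r := by
  unfold rpowMeasure
  split
  · exact (ae_dirac_iff measurableSet_Ici).mpr le_rfl
  · exact (withDensity_absolutelyContinuous _ _).ae_le
      ((ae_restrict_mem measurableSet_Ioi).mono fun r hr => le_of_lt hr)

theorem lintegral_ofReal_sub_rpowMeasure {q d : ℝ} (hq : 1 ≤ q) (hd : 0 ≤ d) :
    ∫⁻ r, ENNReal.ofReal (d - r) ∂rpowMeasure q = ENNReal.ofReal d ^ q := by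
  rcases hq.eq_or_lt with rfl | hq
  · simp [rpowMeasure]
  have hweight : ∀ r : ℝ, 0 < r → 0 ≤ q * (q - 1) * r ^ (q - 2) := fun r hr => by
    have : 0 ≤ q - 1 := by linarith
    positivity
  have hbeyond : ∫⁻ r in Ioi d, ENNReal.ofReal (q * (q - 1) * r ^ (q - 2)) *
      ENNReal.ofReal (d - r) = 0 := by
    rw [← lintegral_zero (μ := volume.restrict (Ioi d))]
    refine setLIntegral_congr_fun measurableSet_Ioi fun r hr => ?_
    rw [ENNReal.ofReal_of_nonpos (p := d - r) (by linarith [mem_Ioi.mp hr]), mul_zero]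
  have hbelow : ∫⁻ r in Ioc 0 d, ENNReal.ofReal (q * (q - 1) * r ^ (q - 2)) *
      ENNReal.ofReal (d - r)
      = ∫⁻ r in Ioc 0 d, ENNReal.ofReal (q * (q - 1) * r ^ (q - 2) * (d - r)) :=
    setLIntegral_congr_fun measurableSet_Ioc fun r hr => (ENNReal.ofReal_mul (hweight r hr.1)).symm
  rw [rpowMeasure, if_neg hq.ne', lintegral_withDensity_eq_lintegral_mul₀ (by fun_prop)
    (by fun_prop), ← Ioc_union_Ioi_eq_Ioi hd, lintegral_union measurableSet_Ioi
    Ioc_disjoint_Ioi_same]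
  simp only [Pi.mul_apply]
  rw [hbeyond, add_zero, hbelow, ← ofReal_integral_eq_lintegral_ofReal,
    ← intervalIntegral.integral_of_le hd, integral_rpow_sub_two_mul_sub hq hd,
    ENNReal.ofReal_rpow_of_nonneg hd (by linarith)]
  · exact (intervalIntegrable_iff_integrableOn_Ioc_of_le hd).mp
      (intervalIntegrable_rpow_sub_two_mul_sub hq)
  · exact (ae_restrict_mem measurableSet_Ioc).mono fun r hr =>
      mul_nonneg (hweight r hr.1) (sub_nonneg.mpr hr.2)

def straddleSet (r : ℝ) : Set ((ℝ × ℝ) × ℝ) :=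
  {p | min p.1.1 p.1.2 ≤ p.2 ∧ p.2 + r < max p.1.1 p.1.2}

theorem measurableSet_straddleSet (r : ℝ) : MeasurableSet (straddleSet r) := by
  have hmin : Measurable fun p : (ℝ × ℝ) × ℝ => min p.1.1 p.1.2 := by fun_prop
  have hmax : Measurable fun p : (ℝ × ℝ) × ℝ => max p.1.1 p.1.2 := by fun_prop
  exact (measurableSet_le hmin measurable_snd).inter
    (measurableSet_lt (measurable_snd.add_const r) hmax)

theorem volume_straddleSet_section (x y r : ℝ) :
    volume {s | ((x, y), s) ∈ straddleSet r} = ENNReal.ofReal (|x - y| - r) := by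
  have : {s | ((x, y), s) ∈ straddleSet r} = Ico (min x y) (max x y - r) := by
    ext s
    simp only [straddleSet, mem_ofPred_eq, mem_Ico]
    constructor <;> rintro ⟨h₁, h₂⟩ <;> exact ⟨h₁, by linarith⟩
  rw [this, Real.volume_Ico, ← max_sub_min_eq_abs']
  ring_nf

theorem lintegral_enorm_sub_rpow_eq {Ω : Type*} [MeasurableSpace Ω] {μ : Measure Ω} [SFinite μ]
    {X Y : Ω → ℝ} (hX : AEMeasurable X μ) (hY : AEMeasurable Y μ) {q : ℝ} (hq : 1 ≤ q) :
    ∫⁻ ω, ‖X ω - Y ω‖ₑ ^ q ∂μ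
      = ∫⁻ r, ∫⁻ s, μ {ω | ((X ω, Y ω), s) ∈ straddleSet r} ∂volume
          ∂rpowMeasure q := by
  have hXY : AEMeasurable (fun ω => (X ω, Y ω)) μ := hX.prodMk hY
  calc ∫⁻ ω, ‖X ω - Y ω‖ₑ ^ q ∂μ
      = ∫⁻ ω, ∫⁻ r, ENNReal.ofReal (|X ω - Y ω| - r) ∂rpowMeasure q ∂μ := by
        simp_rw [lintegral_ofReal_sub_rpowMeasure hq (abs_nonneg _), Real.enorm_eq_ofReal_abs]
    _ = ∫⁻ r, ∫⁻ ω, ENNReal.ofReal (|X ω - Y ω| - r) ∂μ ∂rpowMeasure q :=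
        have hdiff : AEMeasurable (fun p : Ω × ℝ => X p.1 - Y p.1) (μ.prod (rpowMeasure q)) :=
          (hX.sub hY).comp_fst
        lintegral_lintegral_swap (by fun_prop)
    _ = ∫⁻ r, ∫⁻ ω, ∫⁻ s, (straddleSet r).indicator 1 ((X ω, Y ω), s) ∂volume ∂μ
          ∂rpowMeasure q := by
        refine lintegral_congr fun r => lintegral_congr fun ω => ?_
        rw [← volume_straddleSet_section]
        exact (lintegral_indicator_one (measurable_prodMk_left (measurableSet_straddleSet r))).symm
    _ = _ := by
        refine lintegral_congr fun r => ?_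
        rw [lintegral_lintegral_swap]
        · exact lintegral_congr fun s => lintegral_indicator_one₀
            ((hXY.prodMk aemeasurable_const).nullMeasurable (measurableSet_straddleSet r))
        · exact (measurable_one.indicator (measurableSet_straddleSet r)).comp_aemeasurable
            (hXY.comp_fst.prodMk measurable_snd.aemeasurable)

noncomputable def distribOn (a b : ℝ) (f : ℝ → ℝ) (x : ℝ) : ℝ≥0∞ :=
  volume.restrict (Ioc a b) {u | f u ≤ x}

theorem rearrangeOn_eq_sInf (a b : ℝ) (f : ℝ → ℝ) (α : ℝ) :
    rearrangeOn a b f α = sInf {x | ENNReal.ofReal (α - a) ≤ distribOn a b f x} := by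
  have h (x : ℝ) : volume {u ∈ Icc a b | f u ≤ x} = distribOn a b f x := by
    rw [distribOn, Measure.restrict_congr_set Ioc_ae_eq_Icc,
      Measure.restrict_apply' measurableSet_Icc, inter_comm]
    rfl
  simp only [rearrangeOn, h]

section Rearrangement

variable {a b M x α : ℝ} {f g : ℝ → ℝ}

theorem distribOn_mono {y : ℝ} (hxy : x ≤ y) : distribOn a b f x ≤ distribOn a b f y :=
  measure_mono fun _ hu => le_trans hu hxy

theorem distribOn_le : distribOn a b f x ≤ ENNReal.ofReal (b - a) := by
  rw [← Real.volume_Ioc, ← Measure.restrict_apply_univ]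
  exact measure_mono (subset_univ _)

theorem distribOn_ne_top : distribOn a b f x ≠ ∞ :=
  ne_top_of_le_ne_top ofReal_ne_top distribOn_le

theorem distribOn_of_le (hfb : ∀ u ∈ Icc a b, |f u| ≤ M) (hx : M ≤ x) :
    distribOn a b f x = ENNReal.ofReal (b - a) := by
  rw [distribOn, Measure.restrict_apply_superset, Real.volume_Ioc]
  exact fun u hu => (le_abs_self _).trans ((hfb u (Ioc_subset_Icc_self hu)).trans hx)

theorem distribOn_of_lt_neg (hfb : ∀ u ∈ Icc a b, |f u| ≤ M) (hx : x < -M) :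
    distribOn a b f x = 0 := by
  have hempty : {u | f u ≤ x} ∩ Ioc a b = ∅ :=
    eq_empty_of_forall_notMem fun u ⟨(hfu : f u ≤ x), hu⟩ => by
      linarith [neg_abs_le (f u), hfb u (Ioc_subset_Icc_self hu)]
  rw [distribOn, Measure.restrict_apply' measurableSet_Ioc, hempty, measure_empty]

theorem rearrangeOn_le_iff (hf : Measurable f) (hfb : ∀ u ∈ Icc a b, |f u| ≤ M)
    (hα : α ∈ Ioc a b) :
    rearrangeOn a b f α ≤ x ↔ ENNReal.ofReal (α - a) ≤ distribOn a b f x := by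
  set S := {y | ENNReal.ofReal (α - a) ≤ distribOn a b f y}
  have hne : S.Nonempty := ⟨M, by
    rw [mem_ofPred_eq, distribOn_of_le hfb le_rfl]
    exact ofReal_le_ofReal (by linarith [hα.2])⟩
  have hbdd : BddBelow S := ⟨-M, fun y hy => by
    by_contra! h
    rw [mem_ofPred_eq, distribOn_of_lt_neg hfb h, nonpos_iff_eq_zero, ofReal_eq_zero] at hy
    linarith [hα.1]⟩
  rw [rearrangeOn_eq_sInf]
  refine ⟨fun h => le_measure_setOf_le_of_forall_gt hf.aemeasurable fun y hy => ?_,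
    fun h => csInf_le hbdd h⟩
  obtain ⟨z, hzS, hzy⟩ := exists_lt_of_csInf_lt hne (h.trans_lt hy)
  exact hzS.trans (distribOn_mono hzy.le)

theorem rearrangeOn_mem_Icc (hf : Measurable f) (hfb : ∀ u ∈ Icc a b, |f u| ≤ M)
    (hα : α ∈ Ioc a b) : rearrangeOn a b f α ∈ Icc (-M) M := by
  refine ⟨le_of_not_gt fun hlt => ?_, ?_⟩
  · obtain ⟨y, hfy, hy⟩ := exists_between hlt
    have := (rearrangeOn_le_iff hf hfb hα).mp hfy.le
    rw [distribOn_of_lt_neg hfb hy, nonpos_iff_eq_zero, ofReal_eq_zero] at this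
    linarith [hα.1]
  · rw [rearrangeOn_le_iff hf hfb hα, distribOn_of_le hfb le_rfl]
    exact ofReal_le_ofReal (by linarith [hα.2])

theorem monotoneOn_rearrangeOn (hf : Measurable f) (hfb : ∀ u ∈ Icc a b, |f u| ≤ M) :
    MonotoneOn (rearrangeOn a b f) (Ioc a b) := fun α hα β hβ hαβ => by
  rw [rearrangeOn_le_iff hf hfb hα]
  exact (ofReal_le_ofReal (by linarith)).trans ((rearrangeOn_le_iff hf hfb hβ).mp le_rfl)

theorem aemeasurable_rearrangeOn (hf : Measurable f) (hfb : ∀ u ∈ Icc a b, |f u| ≤ M) :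
    AEMeasurable (rearrangeOn a b f) (volume.restrict (Ioc a b)) :=
  aemeasurable_restrict_of_monotoneOn measurableSet_Ioc (monotoneOn_rearrangeOn hf hfb)

theorem setOf_rearrangeOn_le_inter_Ioc (hf : Measurable f) (hfb : ∀ u ∈ Icc a b, |f u| ≤ M)
    (x : ℝ) :
    {α | rearrangeOn a b f α ≤ x} ∩ Ioc a b = Ioc a (a + (distribOn a b f x).toReal) := by
  ext α
  simp only [mem_inter_iff, mem_ofPred_eq, mem_Ioc]
  constructor
  · rintro ⟨hle, hα⟩
    rw [rearrangeOn_le_iff hf hfb hα, ofReal_le_iff_le_toReal distribOn_ne_top] at hle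
    exact ⟨hα.1, by linarith⟩
  · rintro ⟨haα, hαF⟩
    have hFb : ENNReal.ofReal (α - a) ≤ ENNReal.ofReal (b - a) :=
      ((ofReal_le_iff_le_toReal distribOn_ne_top).mpr (by linarith)).trans distribOn_le
    have hα : α ∈ Ioc a b := ⟨haα, by
      linarith [(ofReal_le_ofReal_iff'.mp hFb).resolve_right (by linarith)]⟩
    rw [rearrangeOn_le_iff hf hfb hα, ofReal_le_iff_le_toReal distribOn_ne_top]
    exact ⟨by linarith, hα⟩

theorem distribOn_rearrangeOn (hf : Measurable f) (hfb : ∀ u ∈ Icc a b, |f u| ≤ M) (x : ℝ) :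
    distribOn a b (rearrangeOn a b f) x = distribOn a b f x := by
  rw [distribOn, Measure.restrict_apply' measurableSet_Ioc, setOf_rearrangeOn_le_inter_Ioc hf hfb,
    Real.volume_Ioc, add_sub_cancel_left, ofReal_toReal distribOn_ne_top]

theorem map_rearrangeOn (hf : Measurable f) (hfb : ∀ u ∈ Icc a b, |f u| ≤ M) :
    (volume.restrict (Ioc a b)).map (rearrangeOn a b f) = (volume.restrict (Ioc a b)).map f := by
  refine Measure.ext_of_Iic _ _ fun x => ?_
  rw [Measure.map_apply_of_aemeasurable (aemeasurable_rearrangeOn hf hfb) measurableSet_Iic,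
    Measure.map_apply hf measurableSet_Iic]
  exact distribOn_rearrangeOn hf hfb x

theorem measure_rearrangeOn_le_lt_le (hf : Measurable f) (hfb : ∀ u ∈ Icc a b, |f u| ≤ M)
    (hg : Measurable g) (hgb : ∀ u ∈ Icc a b, |g u| ≤ M) (s t : ℝ) :
    volume.restrict (Ioc a b) {α | rearrangeOn a b f α ≤ s ∧ t < rearrangeOn a b g α}
      ≤ volume.restrict (Ioc a b) {u | f u ≤ s ∧ t < g u} := by
  have hset : {α | rearrangeOn a b f α ≤ s ∧ t < rearrangeOn a b g α} ∩ Ioc a b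
      = Ioc (a + (distribOn a b g t).toReal) (a + (distribOn a b f s).toReal) := by
    ext α
    have hfα := Set.ext_iff.mp (setOf_rearrangeOn_le_inter_Ioc hf hfb s) α
    have hgα := Set.ext_iff.mp (setOf_rearrangeOn_le_inter_Ioc hg hgb t) α
    have : 0 ≤ (distribOn a b g t).toReal := toReal_nonneg
    simp only [mem_inter_iff, mem_ofPred_eq, mem_Ioc] at hfα hgα ⊢
    grind
  calc volume.restrict (Ioc a b) {α | rearrangeOn a b f α ≤ s ∧ t < rearrangeOn a b g α}
      = distribOn a b f s - distribOn a b g t := by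
        rw [Measure.restrict_apply' measurableSet_Ioc, hset, Real.volume_Ioc,
          add_sub_add_left_eq_sub, ofReal_sub _ toReal_nonneg, ofReal_toReal distribOn_ne_top,
          ofReal_toReal distribOn_ne_top]
    _ ≤ volume.restrict (Ioc a b) ({u | f u ≤ s} \ {u | g u ≤ t}) := le_measure_sdiff
    _ = volume.restrict (Ioc a b) {u | f u ≤ s ∧ t < g u} := by
        congr 1
        ext u
        simp [not_le]

theorem setOf_mem_straddleSet {Ω : Type*} (X Y : Ω → ℝ) (r s : ℝ) :
    {ω | ((X ω, Y ω), s) ∈ straddleSet r}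
      = {ω | X ω ≤ s ∧ s + r < Y ω} ∪ {ω | Y ω ≤ s ∧ s + r < X ω} := by
  ext ω
  simp only [straddleSet, mem_ofPred_eq, mem_union]
  grind

theorem measure_straddleSet_rearrangeOn_le (hf : Measurable f)
    (hfb : ∀ u ∈ Icc a b, |f u| ≤ M) (hg : Measurable g)
    (hgb : ∀ u ∈ Icc a b, |g u| ≤ M) {r : ℝ} (hr : 0 ≤ r) (s : ℝ) :
    volume.restrict (Ioc a b)
        {α | ((rearrangeOn a b f α, rearrangeOn a b g α), s) ∈ straddleSet r}
      ≤ volume.restrict (Ioc a b) {u | ((f u, g u), s) ∈ straddleSet r} := by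
  have hdisj : Disjoint {u | f u ≤ s ∧ s + r < g u} {u | g u ≤ s ∧ s + r < f u} :=
    disjoint_left.mpr fun u h₁ h₂ => by linarith [h₁.1, h₁.2, h₂.1, h₂.2]
  rw [setOf_mem_straddleSet, setOf_mem_straddleSet,
    measure_union hdisj ((measurableSet_le hg measurable_const).inter
      (measurableSet_lt measurable_const hf))]
  exact (measure_union_le _ _).trans (add_le_add
    (measure_rearrangeOn_le_lt_le hf hfb hg hgb s (s + r))
    (measure_rearrangeOn_le_lt_le hg hgb hf hfb s (s + r)))

theorem lintegral_enorm_rearrangeOn_sub_rpow_le (hf : Measurable f)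
    (hfb : ∀ u ∈ Icc a b, |f u| ≤ M) (hg : Measurable g)
    (hgb : ∀ u ∈ Icc a b, |g u| ≤ M) {q : ℝ} (hq : 1 ≤ q) :
    ∫⁻ α, ‖rearrangeOn a b f α - rearrangeOn a b g α‖ₑ ^ q ∂volume.restrict (Ioc a b)
      ≤ ∫⁻ u, ‖f u - g u‖ₑ ^ q ∂volume.restrict (Ioc a b) := by
  rw [lintegral_enorm_sub_rpow_eq (aemeasurable_rearrangeOn hf hfb)
      (aemeasurable_rearrangeOn hg hgb) hq,
    lintegral_enorm_sub_rpow_eq hf.aemeasurable hg.aemeasurable hq]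
  exact lintegral_mono_ae ((ae_nonneg_rpowMeasure q).mono fun r hr =>
    lintegral_mono fun s => measure_straddleSet_rearrangeOn_le hf hfb hg hgb hr s)

theorem rearrangeOn_le_add_of_ae_le (hf : Measurable f) (hfb : ∀ u ∈ Icc a b, |f u| ≤ M)
    (hg : Measurable g) (hgb : ∀ u ∈ Icc a b, |g u| ≤ M) {c : ℝ}
    (h : ∀ᵐ u ∂volume.restrict (Ioc a b), f u ≤ g u + c) (hα : α ∈ Ioc a b) :
    rearrangeOn a b f α ≤ rearrangeOn a b g α + c := by
  rw [rearrangeOn_le_iff hf hfb hα]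
  refine ((rearrangeOn_le_iff hg hgb hα).mp le_rfl).trans (measure_mono_ae ?_)
  exact h.mono fun u hu (hgu : g u ≤ _) => show f u ≤ _ by linarith

theorem eLpNormEssSup_rearrangeOn_sub_le (hf : Measurable f)
    (hfb : ∀ u ∈ Icc a b, |f u| ≤ M) (hg : Measurable g)
    (hgb : ∀ u ∈ Icc a b, |g u| ≤ M) :
    eLpNormEssSup (fun α => rearrangeOn a b f α - rearrangeOn a b g α)
        (volume.restrict (Ioc a b))
      ≤ eLpNormEssSup (fun u => f u - g u) (volume.restrict (Ioc a b)) := by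
  set C := eLpNormEssSup (fun u => f u - g u) (volume.restrict (Ioc a b))
  rcases eq_or_ne C ∞ with hC | hC
  · exact hC ▸ le_top
  have hbound : ∀ᵐ u ∂volume.restrict (Ioc a b), |f u - g u| ≤ C.toReal :=
    ae_le_eLpNormEssSup.mono fun u hu => by
      rwa [← ofReal_le_iff_le_toReal hC, ← Real.enorm_eq_ofReal_abs]
  refine eLpNormEssSup_le_of_ae_enorm_bound
    ((ae_restrict_mem measurableSet_Ioc).mono fun α hα => ?_)
  rw [Real.enorm_eq_ofReal_abs, ofReal_le_iff_le_toReal hC, abs_sub_le_iff, sub_le_iff_le_add',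
    sub_le_iff_le_add']
  exact ⟨rearrangeOn_le_add_of_ae_le hf hfb hg hgb
      (hbound.mono fun u hu => by linarith [(abs_le.mp hu).2]) hα,
    rearrangeOn_le_add_of_ae_le hg hgb hf hfb
      (hbound.mono fun u hu => by linarith [(abs_le.mp hu).1]) hα⟩

theorem eLpNorm_rearrangeOn_sub_le (hf : Measurable f) (hfb : ∀ u ∈ Icc a b, |f u| ≤ M)
    (hg : Measurable g) (hgb : ∀ u ∈ Icc a b, |g u| ≤ M) {p : ℝ≥0∞} (hp : 1 ≤ p) :
    eLpNorm (fun α => rearrangeOn a b f α - rearrangeOn a b g α) p (volume.restrict (Ioc a b))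
      ≤ eLpNorm (fun u => f u - g u) p (volume.restrict (Ioc a b)) := by
  rcases eq_or_ne p ∞ with rfl | hp_top
  · simpa only [eLpNorm_exponent_top] using eLpNormEssSup_rearrangeOn_sub_le hf hfb hg hgb
  have hp₀ : p ≠ 0 := (zero_lt_one.trans_le hp).ne'
  rw [eLpNorm_eq_lintegral_rpow_enorm_toReal hp₀ hp_top,
    eLpNorm_eq_lintegral_rpow_enorm_toReal hp₀ hp_top]
  refine ENNReal.rpow_le_rpow
    (lintegral_enorm_rearrangeOn_sub_rpow_le hf hfb hg hgb ?_) (by positivity)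
  simpa using ENNReal.toReal_mono hp_top hp

theorem rearrangeOn_le_of_monotoneOn (hg : Measurable g) (hgb : ∀ u ∈ Icc a b, |g u| ≤ M)
    (hmono : MonotoneOn g (Icc a b)) (hα : α ∈ Ioc a b) : rearrangeOn a b g α ≤ g α := by
  rw [rearrangeOn_le_iff hg hgb hα, distribOn, Measure.restrict_apply' measurableSet_Ioc,
    ← Real.volume_Ioc]
  refine measure_mono fun u hu => ⟨?_, hu.1, hu.2.trans hα.2⟩
  exact hmono ⟨hu.1.le, hu.2.trans hα.2⟩ (Ioc_subset_Icc_self hα) hu.2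

theorem rearrangeOn_ae_eq_of_monotoneOn (hg : Measurable g) (hgb : ∀ u ∈ Icc a b, |g u| ≤ M)
    (hmono : MonotoneOn g (Icc a b)) :
    rearrangeOn a b g =ᵐ[volume.restrict (Ioc a b)] g := by
  have hmem : ∀ᵐ α ∂volume.restrict (Ioc a b), α ∈ Ioc a b :=
    ae_restrict_mem measurableSet_Ioc
  have hlintegral : ∫⁻ α in Ioc a b, ENNReal.ofReal (rearrangeOn a b g α + M)
      = ∫⁻ u in Ioc a b, ENNReal.ofReal (g u + M) := by
    have hshift : Measurable fun x : ℝ => ENNReal.ofReal (x + M) := by fun_prop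
    rw [← lintegral_map' hshift.aemeasurable (aemeasurable_rearrangeOn hg hgb),
      map_rearrangeOn hg hgb, lintegral_map hshift hg]
  have hfin : ∫⁻ α in Ioc a b, ENNReal.ofReal (rearrangeOn a b g α + M) ≠ ∞ := by
    refine ne_top_of_le_ne_top (b := ∫⁻ _ in Ioc a b, ENNReal.ofReal (M + M)) ?_
      (lintegral_mono_ae (hmem.mono fun α hα => ofReal_le_ofReal ?_))
    · rw [lintegral_const]
      exact mul_ne_top ofReal_ne_top (measure_ne_top _ _)
    · linarith [(rearrangeOn_mem_Icc hg hgb hα).2]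
  have hshifted := ae_eq_of_ae_le_of_lintegral_le
    (hmem.mono fun α hα => ofReal_le_ofReal
      (by linarith [rearrangeOn_le_of_monotoneOn hg hgb hmono hα]))
    hfin (by fun_prop) hlintegral.ge
  filter_upwards [hshifted, hmem] with α hα hαIoc
  have hlow := (rearrangeOn_mem_Icc hg hgb hαIoc).1
  have hgα := (abs_le.mp (hgb α (Ioc_subset_Icc_self hαIoc))).1
  exact add_right_cancel ((ofReal_eq_ofReal_iff (by linarith) (by linarith)).mp hα)

end Rearrangement

theorem stmt16_general (a b : ℝ) (f g : ℝ → ℝ)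
    (hf : Measurable f) (hg : Measurable g)
    (M : ℝ) (hfb : ∀ u ∈ Set.Icc a b, |f u| ≤ M) (hgb : ∀ u ∈ Set.Icc a b, |g u| ≤ M)
    (p : ℝ≥0∞) (hp : 1 ≤ p) :
    (eLpNorm (fun u => rearrangeOn a b f u - rearrangeOn a b g u) p
        (volume.restrict (Set.Icc a b))
      ≤ eLpNorm (fun u => f u - g u) p (volume.restrict (Set.Icc a b))) ∧
    (MonotoneOn g (Set.Icc a b) →
      eLpNorm (fun u => rearrangeOn a b f u - g u) p (volume.restrict (Set.Icc a b))
        ≤ eLpNorm (fun u => f u - g u) p (volume.restrict (Set.Icc a b))) := by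
  have hcontract := eLpNorm_rearrangeOn_sub_le hf hfb hg hgb hp
  rw [Measure.restrict_congr_set Ioc_ae_eq_Icc.symm]
  refine ⟨hcontract, fun hmono => ?_⟩
  calc eLpNorm (fun u => rearrangeOn a b f u - g u) p (volume.restrict (Ioc a b))
      = eLpNorm (fun u => rearrangeOn a b f u - rearrangeOn a b g u) p
          (volume.restrict (Ioc a b)) :=
        eLpNorm_congr_ae ((rearrangeOn_ae_eq_of_monotoneOn hg hgb hmono).mono fun u hu => by
          simp only [hu])
    _ ≤ _ := hcontract

theorem stmt16 (a b : ℝ) (hab : a < b) (f g : ℝ → ℝ)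
    (hf : Measurable f) (hg : Measurable g)
    (M : ℝ) (hfb : ∀ u ∈ Set.Icc a b, |f u| ≤ M) (hgb : ∀ u ∈ Set.Icc a b, |g u| ≤ M)
    (p : ℝ≥0∞) (hp : 1 ≤ p) :
    (eLpNorm (fun u => rearrangeOn a b f u - rearrangeOn a b g u) p
        (volume.restrict (Set.Icc a b))
      ≤ eLpNorm (fun u => f u - g u) p (volume.restrict (Set.Icc a b))) ∧
    (MonotoneOn g (Set.Icc a b) →
      eLpNorm (fun u => rearrangeOn a b f u - g u) p (volume.restrict (Set.Icc a b))
        ≤ eLpNorm (fun u => f u - g u) p (volume.restrict (Set.Icc a b))) :=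
  stmt16_general a b f g hf hg M hfb hgb p hp
end
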